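/- arXiv:2107.06699 — 2 statements merged into one kernel-verified Lean document; each statement's English description precedes it below -/
import Mathlib

section
/- Angular dynamics for the underwater bank: let a > b > 0 and let γ, h be nonzero real constants. Let (ρ(t), φ(t), u(t), v(t)) be a differentiable solution of the Hamilton equations for the polar Hamiltonian 𝓗 on an open interval I, with ρ(t) > 0 and (u(t), v(t)) ≠ (0,0), such that v ≡ γ and 𝓗 ≡ γ/h along the solution. Then for all t ∈ I: φ̇(t) = (h/ρ(t)²) · (ρ(t)² + b)/(ρ(t)² + a). -/
/-- The underwater-bank Hamiltonian in polar coordinates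
`𝓗(ρ, φ, u, v) = √(u² + v²/ρ²) · √((ρ² + b)/(ρ² + a))` (independent of `φ`). -/
noncomputable def polarH (a b ρ φ u v : ℝ) : ℝ :=
  Real.sqrt (u ^ 2 + v ^ 2 / ρ ^ 2) * Real.sqrt ((ρ ^ 2 + b) / (ρ ^ 2 + a))

/-! Write `K = (ρ² + b)/(ρ² + a)`. On the level set `𝓗 = v/h` we have
`√(u² + v²/ρ²) · √K = v/h`, so the Hamilton equation
`φ̇ = ∂𝓗/∂v = (v/ρ²) · √K / √(u² + v²/ρ²)` becomes `φ̇ = h K / ρ²`. -/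

open Real

lemma sq_add_sq_div_sq_pos {u v ρ : ℝ} (huv : (u, v) ≠ (0, 0)) (hρ : ρ ≠ 0) :
    0 < u ^ 2 + v ^ 2 / ρ ^ 2 := by
  rcases eq_or_ne u 0 with rfl | hu
  · have hv : v ≠ 0 := fun hv => huv (by rw [hv])
    positivity
  · positivity

lemma hasDerivAt_polarH_momentum {a b ρ φ u v : ℝ} (hS : u ^ 2 + v ^ 2 / ρ ^ 2 ≠ 0) :
    HasDerivAt (fun q => polarH a b ρ φ u q)
      (v / ρ ^ 2 / √(u ^ 2 + v ^ 2 / ρ ^ 2) * √((ρ ^ 2 + b) / (ρ ^ 2 + a))) v := by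
  have hinner : HasDerivAt (fun q : ℝ => u ^ 2 + q ^ 2 / ρ ^ 2) (2 * v / ρ ^ 2) v := by
    simpa using ((hasDerivAt_pow 2 v).div_const (ρ ^ 2)).const_add (u ^ 2)
  exact ((hinner.sqrt hS).mul_const _).congr_deriv (by field_simp)

lemma deriv_polarH_momentum_of_eq_div {a b ρ φ u v h : ℝ} (hh : h ≠ 0)
    (hS : 0 < u ^ 2 + v ^ 2 / ρ ^ 2) (hK : 0 ≤ (ρ ^ 2 + b) / (ρ ^ 2 + a))
    (hlevel : polarH a b ρ φ u v = v / h) :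
    deriv (fun q => polarH a b ρ φ u q) v = h / ρ ^ 2 * ((ρ ^ 2 + b) / (ρ ^ 2 + a)) := by
  set s := √(u ^ 2 + v ^ 2 / ρ ^ 2)
  set K := (ρ ^ 2 + b) / (ρ ^ 2 + a)
  have hs : s ≠ 0 := (sqrt_pos.mpr hS).ne'
  rw [polarH, eq_div_iff hh] at hlevel
  calc deriv (fun q => polarH a b ρ φ u q) v
      = s * √K * h / ρ ^ 2 / s * √K := by
        rw [(hasDerivAt_polarH_momentum hS.ne').deriv, hlevel]
    _ = h / ρ ^ 2 * √K ^ 2 := by field_simp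
    _ = h / ρ ^ 2 * K := by rw [sq_sqrt hK]

theorem bank_angular_dynamics_general (a b γ h : ℝ) (hab : a > b) (hb : b > 0)
    (hh : h ≠ 0)
    (t₁ t₂ : ℝ) (ρ φ u v : ℝ → ℝ)
    (hρpos : ∀ t ∈ Set.Ioo t₁ t₂, ρ t > 0)
    (huv : ∀ t ∈ Set.Ioo t₁ t₂, (u t, v t) ≠ (0, 0))
    (hφ : ∀ t ∈ Set.Ioo t₁ t₂, HasDerivAt φ
      (deriv (fun q => polarH a b (ρ t) (φ t) (u t) q) (v t)) t)
    (hvγ : ∀ t ∈ Set.Ioo t₁ t₂, v t = γ)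
    (hlevel : ∀ t ∈ Set.Ioo t₁ t₂, polarH a b (ρ t) (φ t) (u t) (v t) = γ / h) :
    ∀ t ∈ Set.Ioo t₁ t₂,
      HasDerivAt φ (h / ρ t ^ 2 * ((ρ t ^ 2 + b) / (ρ t ^ 2 + a))) t := by
  intro t ht
  have ha : 0 < a := hb.trans hab
  have hS := sq_add_sq_div_sq_pos (huv t ht) (hρpos t ht).ne'
  have hK : 0 ≤ (ρ t ^ 2 + b) / (ρ t ^ 2 + a) := by positivity
  rw [← deriv_polarH_momentum_of_eq_div hh hS hK (by rw [hlevel t ht, hvγ t ht])]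
  exact hφ t ht

/-- Angular dynamics for the underwater bank: along a solution with `v ≡ γ` and
`𝓗 ≡ γ/h`, the angle satisfies `φ̇ = (h/ρ²)·(ρ² + b)/(ρ² + a)`. -/
theorem bank_angular_dynamics (a b γ h : ℝ) (hab : a > b) (hb : b > 0)
    (hγ : γ ≠ 0) (hh : h ≠ 0)
    (t₁ t₂ : ℝ) (ρ φ u v : ℝ → ℝ)
    (hρpos : ∀ t ∈ Set.Ioo t₁ t₂, ρ t > 0)
    (huv : ∀ t ∈ Set.Ioo t₁ t₂, (u t, v t) ≠ (0, 0))
    (hρ : ∀ t ∈ Set.Ioo t₁ t₂, HasDerivAt ρ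
      (deriv (fun q => polarH a b (ρ t) (φ t) q (v t)) (u t)) t)
    (hφ : ∀ t ∈ Set.Ioo t₁ t₂, HasDerivAt φ
      (deriv (fun q => polarH a b (ρ t) (φ t) (u t) q) (v t)) t)
    (hu : ∀ t ∈ Set.Ioo t₁ t₂, HasDerivAt u
      (-(deriv (fun q => polarH a b q (φ t) (u t) (v t)) (ρ t))) t)
    (hv : ∀ t ∈ Set.Ioo t₁ t₂, HasDerivAt v
      (-(deriv (fun q => polarH a b (ρ t) q (u t) (v t)) (φ t))) t)
    (hvγ : ∀ t ∈ Set.Ioo t₁ t₂, v t = γ)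
    (hlevel : ∀ t ∈ Set.Ioo t₁ t₂, polarH a b (ρ t) (φ t) (u t) (v t) = γ / h) :
    ∀ t ∈ Set.Ioo t₁ t₂,
      HasDerivAt φ (h / ρ t ^ 2 * ((ρ t ^ 2 + b) / (ρ t ^ 2 + a))) t :=
  bank_angular_dynamics_general a b γ h hab hb hh t₁ t₂ ρ φ u v hρpos huv hφ hvγ hlevel
end

section
/- Autonomous dynamics for x₁ in the underwater-ridge system: let a > b > 0, 𝔥 > 1, and let γ ≠ 0. Let (x(t), p(t)) be a differentiable curve on an open interval I with p(t) ≠ 0, satisfying Hamilton's equations ẋᵢ = ∂H/∂pᵢ, ṗᵢ = −∂H/∂xᵢ for the ridge Hamiltonian H, with p₂ ≡ γ and H(x(t), p(t))² ≡ γ²𝔥/(𝔥 − 1) along the curve. Then for all t ∈ I: 𝔥 · (x₁(t)² + a)² · ẋ₁(t)² = (x₁(t)² + b) · (𝔥(x₁(t)² + a) − (𝔥 − 1)(x₁(t)² + b)). -/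
/-!
Since `H` depends on `p₁` only through `√(p₁² + p₂²)`, Hamilton's equation gives
`ẋ₁² = p₁² / (p₁² + γ²) · (x₁² + b)/(x₁² + a)`, while the energy level
`(p₁² + γ²)(x₁² + b)/(x₁² + a) = γ²𝔥/(𝔥 − 1)` expresses `p₁²` through `x₁`.
Eliminating `p₁²` between the two leaves an equation in `x₁` and `ẋ₁` alone.
-/

/-- The underwater-ridge Hamiltonian
`H(x,p) = √(p₁² + p₂²) · √((x₁² + b)/(x₁² + a))` (independent of `x₂`). -/
noncomputable def ridgeH (a b x₁ x₂ p₁ p₂ : ℝ) : ℝ :=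
  Real.sqrt (p₁ ^ 2 + p₂ ^ 2) * Real.sqrt ((x₁ ^ 2 + b) / (x₁ ^ 2 + a))

open Real

lemma ridgeH_sq {a b : ℝ} (ha : 0 ≤ a) (hb : 0 ≤ b) (x₁ x₂ p₁ p₂ : ℝ) :
    ridgeH a b x₁ x₂ p₁ p₂ ^ 2 = (p₁ ^ 2 + p₂ ^ 2) * ((x₁ ^ 2 + b) / (x₁ ^ 2 + a)) := by
  rw [ridgeH, mul_pow, sq_sqrt (by positivity), sq_sqrt (by positivity)]

lemma hasDerivAt_ridgeH_p₁ (a b x₁ x₂ : ℝ) {p₁ p₂ : ℝ} (hp : p₁ ^ 2 + p₂ ^ 2 ≠ 0) :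
    HasDerivAt (fun q => ridgeH a b x₁ x₂ q p₂)
      (p₁ / √(p₁ ^ 2 + p₂ ^ 2) * √((x₁ ^ 2 + b) / (x₁ ^ 2 + a))) p₁ := by
  have hnorm : HasDerivAt (fun q : ℝ => √(q ^ 2 + p₂ ^ 2)) (p₁ / √(p₁ ^ 2 + p₂ ^ 2)) p₁ := by
    convert ((hasDerivAt_pow 2 p₁).add_const (p₂ ^ 2)).sqrt hp using 1
    field_simp
    ring
  exact hnorm.mul_const _

lemma deriv_ridgeH_p₁_sq {a b : ℝ} (ha : 0 ≤ a) (hb : 0 ≤ b) (x₁ x₂ : ℝ) {p₁ p₂ : ℝ}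
    (hp : p₁ ^ 2 + p₂ ^ 2 ≠ 0) :
    deriv (fun q => ridgeH a b x₁ x₂ q p₂) p₁ ^ 2
      = p₁ ^ 2 / (p₁ ^ 2 + p₂ ^ 2) * ((x₁ ^ 2 + b) / (x₁ ^ 2 + a)) := by
  rw [(hasDerivAt_ridgeH_p₁ a b x₁ x₂ hp).deriv, mul_pow, div_pow,
    sq_sqrt (by positivity), sq_sqrt (by positivity)]

lemma ridge_eliminate_momentum {𝔥 γ P A B : ℝ} (h𝔥 : 𝔥 ≠ 1) (hA : A ≠ 0)
    (hS : P ^ 2 + γ ^ 2 ≠ 0) (hlevel : (P ^ 2 + γ ^ 2) * (B / A) = γ ^ 2 * 𝔥 / (𝔥 - 1)) :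
    𝔥 * A ^ 2 * (P ^ 2 / (P ^ 2 + γ ^ 2) * (B / A)) = B * (𝔥 * A - (𝔥 - 1) * B) := by
  have h𝔥' : 𝔥 - 1 ≠ 0 := sub_ne_zero.mpr h𝔥
  field_simp at hlevel ⊢
  linear_combination B * hlevel

theorem ridge_autonomous_x1_dynamics_general (a b 𝔥 γ : ℝ) (hab : a > b) (hb : b > 0)
    (h𝔥 : 𝔥 > 1)
    (t₁ t₂ : ℝ) (x₁ x₂ p₁ p₂ : ℝ → ℝ)
    (hp : ∀ t ∈ Set.Ioo t₁ t₂, (p₁ t, p₂ t) ≠ (0, 0))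
    (hx₁ : ∀ t ∈ Set.Ioo t₁ t₂, HasDerivAt x₁
      (deriv (fun q => ridgeH a b (x₁ t) (x₂ t) q (p₂ t)) (p₁ t)) t)
    (hp₂γ : ∀ t ∈ Set.Ioo t₁ t₂, p₂ t = γ)
    (hlevel : ∀ t ∈ Set.Ioo t₁ t₂,
      (ridgeH a b (x₁ t) (x₂ t) (p₁ t) (p₂ t)) ^ 2 = γ ^ 2 * 𝔥 / (𝔥 - 1)) :
    ∀ t ∈ Set.Ioo t₁ t₂,
      𝔥 * (x₁ t ^ 2 + a) ^ 2 * (deriv x₁ t) ^ 2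
        = (x₁ t ^ 2 + b) * (𝔥 * (x₁ t ^ 2 + a) - (𝔥 - 1) * (x₁ t ^ 2 + b)) := by
  intro t ht
  have ha : 0 < a := hb.trans hab
  have hS : p₁ t ^ 2 + p₂ t ^ 2 ≠ 0 := by
    simpa [add_eq_zero_iff_of_nonneg, sq_nonneg] using hp t ht
  have hlev := hlevel t ht
  rw [ridgeH_sq ha.le hb.le] at hlev
  rw [(hx₁ t ht).deriv, deriv_ridgeH_p₁_sq ha.le hb.le _ _ hS]
  rw [hp₂γ t ht] at hS hlev ⊢
  exact ridge_eliminate_momentum h𝔥.ne' (by positivity) hS hlev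

/-- Autonomous dynamics for `x₁` in the underwater-ridge system: along a solution
with `p₂ ≡ γ` and `H² ≡ γ²𝔥/(𝔥 − 1)`, one has
`𝔥(x₁² + a)²ẋ₁² = (x₁² + b)(𝔥(x₁² + a) − (𝔥 − 1)(x₁² + b))`. -/
theorem ridge_autonomous_x1_dynamics (a b 𝔥 γ : ℝ) (hab : a > b) (hb : b > 0)
    (h𝔥 : 𝔥 > 1) (hγ : γ ≠ 0)
    (t₁ t₂ : ℝ) (x₁ x₂ p₁ p₂ : ℝ → ℝ)
    (hp : ∀ t ∈ Set.Ioo t₁ t₂, (p₁ t, p₂ t) ≠ (0, 0))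
    (hx₁ : ∀ t ∈ Set.Ioo t₁ t₂, HasDerivAt x₁
      (deriv (fun q => ridgeH a b (x₁ t) (x₂ t) q (p₂ t)) (p₁ t)) t)
    (hx₂ : ∀ t ∈ Set.Ioo t₁ t₂, HasDerivAt x₂
      (deriv (fun q => ridgeH a b (x₁ t) (x₂ t) (p₁ t) q) (p₂ t)) t)
    (hp₁ : ∀ t ∈ Set.Ioo t₁ t₂, HasDerivAt p₁
      (-(deriv (fun q => ridgeH a b q (x₂ t) (p₁ t) (p₂ t)) (x₁ t))) t)
    (hp₂ : ∀ t ∈ Set.Ioo t₁ t₂, HasDerivAt p₂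
      (-(deriv (fun q => ridgeH a b (x₁ t) q (p₁ t) (p₂ t)) (x₂ t))) t)
    (hp₂γ : ∀ t ∈ Set.Ioo t₁ t₂, p₂ t = γ)
    (hlevel : ∀ t ∈ Set.Ioo t₁ t₂,
      (ridgeH a b (x₁ t) (x₂ t) (p₁ t) (p₂ t)) ^ 2 = γ ^ 2 * 𝔥 / (𝔥 - 1)) :
    ∀ t ∈ Set.Ioo t₁ t₂,
      𝔥 * (x₁ t ^ 2 + a) ^ 2 * (deriv x₁ t) ^ 2
        = (x₁ t ^ 2 + b) * (𝔥 * (x₁ t ^ 2 + a) - (𝔥 - 1) * (x₁ t ^ 2 + b)) :=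
  ridge_autonomous_x1_dynamics_general a b 𝔥 γ hab hb h𝔥 t₁ t₂ x₁ x₂ p₁ p₂ hp hx₁ hp₂γ hlevel
end
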